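/- Let (R, α) be a multiplicative Hom-Lie conformal superalgebra. Then GDer(R) = QDer(R) + QC(R); in particular, every homogeneous generalized α^k-derivation D of R can be written as D = (D + D')/2 + (D − D')/2 with (D + D')/2 an α^k-quasiderivation and (D − D')/2 an α^k-quasicentroid, where D' is as in the definition of generalized α^k-derivation. -/

import Mathlib

noncomputable section

namespace HLCS

open scoped BigOperators

/-- Evaluation at `l : ℂ` of a polynomial (in `λ`) with coefficients in `M`,
encoded as a finitely supported family of coefficients. -/
def pev {M : Type} [AddCommGroup M] [Module ℂ M] (l : ℂ) (p : ℕ →₀ M) : M :=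
  p.sum fun n r => l ^ n • r

/-- Evaluation of a polynomial with coefficients in `M` at an operator `T`
(used for substitutions such as `-λ - ∂`). -/
def pevOp {M : Type} [AddCommGroup M] [Module ℂ M] (T : Module.End ℂ M) (p : ℕ →₀ M) : M :=
  p.sum fun n r => (T ^ n) r

/-- The super sign `(-1)^{|a||b|}` attached to parities `i`, `j`. -/
def sg (i j : ZMod 2) : ℂ := (-1 : ℂ) ^ (i * j).val

/-- The data of a `ℤ₂`-graded `ℂ[∂]`-module `R` with an endomorphism `α` and a
`ℂ`-bilinear `λ`-bracket with values in `ℂ[λ] ⊗ R` (encoded by its coefficients). -/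
structure Data (R : Type) [AddCommGroup R] [Module ℂ R] where
  der : Module.End ℂ R
  alpha : Module.End ℂ R
  G : ZMod 2 → Submodule ℂ R
  br : R →ₗ[ℂ] R →ₗ[ℂ] (ℕ →₀ R)

namespace Data

variable {R : Type} [AddCommGroup R] [Module ℂ R] (S : Data R)

/-- `[a_λ b]` evaluated at `λ = l`. -/
def lb (l : ℂ) (a b : R) : R := pev l (S.br a b)

/-- `[a_{-l-∂} b]` : the bracket with `-l - ∂` substituted for `λ`. -/
def lbOp (l : ℂ) (a b : R) : R :=
  pevOp ((-l) • (1 : Module.End ℂ R) - S.der) (S.br a b)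

/-- Multiplicativity: `α [a_λ b] = [α(a)_λ α(b)]`. -/
def Mult : Prop := ∀ (l : ℂ) (a b : R), S.alpha (S.lb l a b) = S.lb l (S.alpha a) (S.alpha b)

end Data

variable {R : Type} [AddCommGroup R] [Module ℂ R]

/-- `(R, α)` with the given data is a Hom-Lie conformal superalgebra.
All polynomial identities in `λ, μ` are stated by evaluating at arbitrary
complex numbers (which is equivalent, `ℂ` being infinite). -/
structure IsHLCS (S : Data R) : Prop where
  internal : DirectSum.IsInternal S.G
  der_even : ∀ i, ∀ a ∈ S.G i, S.der a ∈ S.G i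
  alpha_even : ∀ i, ∀ a ∈ S.G i, S.alpha a ∈ S.G i
  alpha_der : ∀ a, S.alpha (S.der a) = S.der (S.alpha a)
  br_grade : ∀ i j, ∀ a ∈ S.G i, ∀ b ∈ S.G j, ∀ n, S.br a b n ∈ S.G (i + j)
  conf_left : ∀ (l : ℂ) (a b : R), S.lb l (S.der a) b = -l • S.lb l a b
  conf_right : ∀ (l : ℂ) (a b : R), S.lb l a (S.der b) = S.der (S.lb l a b) + l • S.lb l a b
  skew : ∀ i j, ∀ a ∈ S.G i, ∀ b ∈ S.G j, ∀ l : ℂ,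
    S.lb l a b = (-sg i j) • S.lbOp l b a
  jacobi : ∀ i j, ∀ a ∈ S.G i, ∀ b ∈ S.G j, ∀ (c : R) (l m : ℂ),
    S.lb l (S.alpha a) (S.lb m b c) =
      S.lb (l + m) (S.lb l a b) (S.alpha c) + sg i j • S.lb m (S.alpha b) (S.lb l a c)

end HLCS
namespace HLCS

variable {R : Type} [AddCommGroup R] [Module ℂ R]

/-- A homogeneous conformal linear map of parity `d` on `R`, encoded as the family of
its evaluations `F l : R → R` (`l : ℂ`): it is `ℂ`-linear, polynomial in `l`, and
satisfies `F_λ(∂a) = (∂ + λ) F_λ(a)`. -/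
structure IsConfMap (S : Data R) (d : ZMod 2) (F : ℂ → R → R) : Prop where
  map_add : ∀ (l : ℂ) (a b : R), F l (a + b) = F l a + F l b
  map_smul : ∀ (l c : ℂ) (a : R), F l (c • a) = c • F l a
  poly : ∀ a : R, ∃ p : ℕ →₀ R, ∀ l : ℂ, F l a = pev l p
  conf : ∀ (l : ℂ) (a : R), F l (S.der a) = S.der (F l a) + l • F l a
  grade : ∀ i, ∀ a ∈ S.G i, ∀ l : ℂ, F l a ∈ S.G (i + d)

/-- Membership in `Ω`: a homogeneous conformal linear map commuting with `α`. -/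
def InOmega (S : Data R) (d : ZMod 2) (F : ℂ → R → R) : Prop :=
  IsConfMap S d F ∧ ∀ (l : ℂ) (a : R), F l (S.alpha a) = S.alpha (F l a)

/-- An `α^k`-derivation of parity `d`. -/
def IsDer (S : Data R) (k : ℕ) (d : ZMod 2) (F : ℂ → R → R) : Prop :=
  InOmega S d F ∧ ∀ i, ∀ a ∈ S.G i, ∀ (b : R) (l m : ℂ),
    F l (S.lb m a b) =
      S.lb (l + m) (F l a) ((S.alpha ^ k) b) +
        ((-1 : ℂ) ^ ((i * d).val)) • S.lb m ((S.alpha ^ k) a) (F l b)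

/-- The commutator `[D_λ D']_μ (a) = D_λ(D'_{μ-λ}(a)) - (-1)^{|D||D'|} D'_{μ-λ}(D_λ(a))`,
with `e = (-1)^{|D||D'|}`; first argument `l` is `λ`, second `m` is `μ`. -/
def brkt (e : ℂ) (F G : ℂ → R → R) : ℂ → ℂ → R → R :=
  fun l m a => F l (G (m - l) a) - e • G (m - l) (F l a)

/-- The twist `α'(D) = D ∘ α`. -/
def tw (S : Data R) (F : ℂ → R → R) : ℂ → R → R := fun l a => F l (S.alpha a)

/-- A generalized `α^k`-derivation of parity `d`. -/
def IsGDer (S : Data R) (k : ℕ) (d : ZMod 2) (F : ℂ → R → R) : Prop :=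
  InOmega S d F ∧ ∃ F' F'' : ℂ → R → R, InOmega S d F' ∧ InOmega S d F'' ∧
    ∀ i, ∀ a ∈ S.G i, ∀ (b : R) (l m : ℂ),
      S.lb (l + m) (F m a) ((S.alpha ^ k) b) +
        ((-1 : ℂ) ^ ((d * i).val)) • S.lb l ((S.alpha ^ k) a) (F' m b) = F'' m (S.lb l a b)

/-- An `α^k`-quasiderivation of parity `d`. -/
def IsQDer (S : Data R) (k : ℕ) (d : ZMod 2) (F : ℂ → R → R) : Prop :=
  InOmega S d F ∧ ∃ F' : ℂ → R → R, InOmega S d F' ∧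
    ∀ i, ∀ a ∈ S.G i, ∀ (b : R) (l m : ℂ),
      S.lb (l + m) (F m a) ((S.alpha ^ k) b) +
        ((-1 : ℂ) ^ ((d * i).val)) • S.lb l ((S.alpha ^ k) a) (F m b) = F' m (S.lb l a b)

/-- An `α^k`-centroid of parity `d`. -/
def IsCent (S : Data R) (k : ℕ) (d : ZMod 2) (F : ℂ → R → R) : Prop :=
  InOmega S d F ∧ ∀ i, ∀ a ∈ S.G i, ∀ (b : R) (l m : ℂ),
    S.lb (l + m) (F m a) ((S.alpha ^ k) b) =
      ((-1 : ℂ) ^ ((d * i).val)) • S.lb l ((S.alpha ^ k) a) (F m b) ∧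
    S.lb (l + m) (F m a) ((S.alpha ^ k) b) = F m (S.lb l a b)

/-- An `α^k`-quasicentroid of parity `d`. -/
def IsQC (S : Data R) (k : ℕ) (d : ZMod 2) (F : ℂ → R → R) : Prop :=
  InOmega S d F ∧ ∀ i, ∀ a ∈ S.G i, ∀ (b : R) (l m : ℂ),
    S.lb (l + m) (F m a) ((S.alpha ^ k) b) =
      ((-1 : ℂ) ^ ((d * i).val)) • S.lb l ((S.alpha ^ k) a) (F m b)

/-- An `α^k`-central derivation of parity `d`. -/
def IsZDer (S : Data R) (k : ℕ) (d : ZMod 2) (F : ℂ → R → R) : Prop :=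
  InOmega S d F ∧ ∀ (a b : R) (l m : ℂ),
    S.lb (l + m) (F m a) ((S.alpha ^ k) b) = 0 ∧ F m (S.lb l a b) = 0

/-- Membership in the center `Z(R)`. -/
def IsCentral (S : Data R) (x : R) : Prop := ∀ (l : ℂ) (y : R), S.lb l x y = 0

end HLCS
namespace HLCS

variable {R : Type} [AddCommGroup R] [Module ℂ R]

/-!
Skew-symmetry makes the generalized-derivation identity symmetric in `D` and `D'`: if `(D, D', D'')`
satisfies it, so does `(D', D, D'')`. For homogeneous `a`, `b`, the identity for the arguments
`(b, a)` is a polynomial identity in `λ`; comparing coefficients, one may substitute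
`λ ↦ -λ - μ - ∂` in it, because `D''_μ` intertwines `-λ - ∂` with `-λ - μ - ∂`. Skew-symmetry turns
the result into the identity for `(a, b)` with `D` and `D'` exchanged. Adding and subtracting the
two identities shows that `(D + D')/2` is a quasiderivation and `(D - D')/2` a quasicentroid;
conversely `Q + C` is a generalized derivation with `D' = Q - C` and `D'' = Q'`.
-/

section Evaluation

variable {M N : Type} [AddCommGroup M] [Module ℂ M] [AddCommGroup N] [Module ℂ N]

def pevOpLinearMap (T : Module.End ℂ M) : (ℕ →₀ M) →ₗ[ℂ] M :=
  Finsupp.lsum ℂ fun n => T ^ n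

lemma pevOpLinearMap_apply (T : Module.End ℂ M) (p : ℕ →₀ M) :
    pevOpLinearMap T p = pevOp T p := rfl

lemma pevOp_add (T : Module.End ℂ M) (p q : ℕ →₀ M) :
    pevOp T (p + q) = pevOp T p + pevOp T q :=
  map_add (pevOpLinearMap T) p q

lemma pevOp_smul (T : Module.End ℂ M) (c : ℂ) (p : ℕ →₀ M) :
    pevOp T (c • p) = c • pevOp T p :=
  map_smul (pevOpLinearMap T) c p

lemma pev_eq_pevOp (l : ℂ) (p : ℕ →₀ M) : pev l p = pevOp (l • 1) p := by
  simp only [pev, pevOp, smul_pow, one_pow, LinearMap.smul_apply, Module.End.one_apply]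

lemma pev_add (l : ℂ) (p q : ℕ →₀ M) : pev l (p + q) = pev l p + pev l q := by
  simp only [pev_eq_pevOp, pevOp_add]

lemma pev_smul (l c : ℂ) (p : ℕ →₀ M) : pev l (c • p) = c • pev l p := by
  simp only [pev_eq_pevOp, pevOp_smul]

lemma pev_sub (l : ℂ) (p q : ℕ →₀ M) : pev l (p - q) = pev l p - pev l q := by
  simp only [pev_eq_pevOp, ← pevOpLinearMap_apply, map_sub]

lemma pev_zero (l : ℂ) : pev l (0 : ℕ →₀ M) = 0 := by
  simp [pev]

lemma dual_pev_eq_eval (φ : Module.Dual ℂ M) (l : ℂ) (p : ℕ →₀ M) :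
    φ (pev l p) = (p.sum fun n r => Polynomial.monomial n (φ r)).eval l := by
  simp [pev, Finsupp.sum, Polynomial.eval_finsetSum, mul_comm]

lemma coeff_sum_monomial (φ : Module.Dual ℂ M) (p : ℕ →₀ M) (n : ℕ) :
    (p.sum fun k r => Polynomial.monomial k (φ r)).coeff n = φ (p n) := by
  simp +contextual [Finsupp.sum, Polynomial.coeff_monomial]

lemma eq_zero_of_forall_pev_eq_zero {p : ℕ →₀ M} (h : ∀ l : ℂ, pev l p = 0) : p = 0 := by
  ext n
  refine (Module.forall_dual_apply_eq_zero_iff ℂ (p n)).1 fun φ => ?_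
  have hP : (p.sum fun k r => Polynomial.monomial k (φ r)) = 0 :=
    Polynomial.funext fun l => by simp [← dual_pev_eq_eval, h l]
  rw [← coeff_sum_monomial φ p n, hP, Polynomial.coeff_zero]

lemma eq_of_forall_pev_eq {p q : ℕ →₀ M} (h : ∀ l : ℂ, pev l p = pev l q) : p = q :=
  sub_eq_zero.1 <| eq_zero_of_forall_pev_eq_zero fun l => by rw [pev_sub, h l, sub_self]

def taylor (c : ℂ) (p : ℕ →₀ M) : ℕ →₀ M :=
  p.sum fun n r =>
    ∑ k ∈ Finset.range (n + 1), Finsupp.single k (((n.choose k : ℂ) * c ^ (n - k)) • r)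

lemma pevOp_taylor (c : ℂ) (T : Module.End ℂ M) (p : ℕ →₀ M) :
    pevOp T (taylor c p) = pevOp (c • 1 + T) p := by
  rw [taylor, ← pevOpLinearMap_apply, map_finsuppSum, pevOp]
  refine Finsupp.sum_congr fun n _ => ?_
  have hc : Commute T (c • (1 : Module.End ℂ M)) := (Commute.one_right T).smul_right c
  rw [map_sum, add_comm (c • 1) T, hc.add_pow, LinearMap.sum_apply]
  refine Finset.sum_congr rfl fun k _ => ?_
  simp only [pevOpLinearMap_apply, pevOp, Finsupp.sum_single_index, map_zero, Module.End.mul_apply,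
    smul_pow, one_pow, LinearMap.smul_apply, Module.End.one_apply, Module.End.natCast_apply,
    map_smul, map_nsmul, mul_smul, Nat.cast_smul_eq_nsmul]

lemma pev_taylor (c l : ℂ) (p : ℕ →₀ M) : pev l (taylor c p) = pev (l + c) p := by
  rw [pev_eq_pevOp, pevOp_taylor, ← add_smul, add_comm, ← pev_eq_pevOp]

lemma pevOp_mapRange (g : M →ₗ[ℂ] N) {T₀ : Module.End ℂ M} {T : Module.End ℂ N}
    (h : ∀ r, g (T₀ r) = T (g r)) (p : ℕ →₀ M) :
    g (pevOp T₀ p) = pevOp T (p.mapRange g (map_zero g)) := by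
  have hpow : ∀ (n : ℕ) (r : M), g ((T₀ ^ n) r) = (T ^ n) (g r) := by
    intro n
    induction n with
    | zero => simp
    | succ n ih =>
      intro r
      rw [pow_succ, pow_succ, Module.End.mul_apply, Module.End.mul_apply, ih, h]
  rw [pevOp, map_finsuppSum, pevOp, Finsupp.sum_mapRange_index fun _ => map_zero _]
  exact Finsupp.sum_congr fun n _ => hpow n (p n)

lemma pev_mapRange (g : M →ₗ[ℂ] N) (l : ℂ) (p : ℕ →₀ M) :
    g (pev l p) = pev l (p.mapRange g (map_zero g)) := by
  simp only [pev_eq_pevOp]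
  exact pevOp_mapRange g (fun r => by simp) p

end Evaluation

lemma sg_mul_sg_add_right (d i j : ZMod 2) : sg d i * sg i (j + d) = sg i j := by
  fin_cases d <;> fin_cases i <;> fin_cases j <;> simp +decide [sg]

lemma sg_add_left (i j d : ZMod 2) : sg (i + d) j = sg i j * sg d j := by
  fin_cases d <;> fin_cases i <;> fin_cases j <;> simp +decide [sg]

namespace Data

variable (S : Data R)

lemma lb_add_left (l : ℂ) (x y b : R) : S.lb l (x + y) b = S.lb l x b + S.lb l y b := by
  rw [lb, lb, lb, map_add, LinearMap.add_apply, pev_add]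

lemma lb_add_right (l : ℂ) (a x y : R) : S.lb l a (x + y) = S.lb l a x + S.lb l a y := by
  rw [lb, lb, lb, map_add, pev_add]

lemma lb_smul_left (l c : ℂ) (x b : R) : S.lb l (c • x) b = c • S.lb l x b := by
  rw [lb, lb, map_smul, LinearMap.smul_apply, pev_smul]

lemma lb_smul_right (l c : ℂ) (a x : R) : S.lb l a (c • x) = c • S.lb l a x := by
  rw [lb, lb, map_smul, pev_smul]

lemma lb_sub_left (l : ℂ) (x y b : R) : S.lb l (x - y) b = S.lb l x b - S.lb l y b := by
  rw [lb, lb, lb, map_sub, LinearMap.sub_apply, pev_sub]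

lemma lb_sub_right (l : ℂ) (a x y : R) : S.lb l a (x - y) = S.lb l a x - S.lb l a y := by
  rw [lb, lb, lb, map_sub, pev_sub]

lemma lb_neg_right (l : ℂ) (a x : R) : S.lb l a (-x) = -S.lb l a x := by
  rw [← neg_one_smul ℂ x, lb_smul_right, neg_one_smul]

lemma lb_zero_right (l : ℂ) (a : R) : S.lb l a 0 = 0 := by
  rw [lb, map_zero, pev_zero]

end Data

section

variable {S : Data R} {d : ZMod 2} {k : ℕ} {F F' F'' : ℂ → R → R}

def IsConfMap.toLinearMap (hF : IsConfMap S d F) (l : ℂ) : R →ₗ[ℂ] R where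
  toFun := F l
  map_add' := hF.map_add l
  map_smul' := hF.map_smul l

lemma IsConfMap.map_zero (hF : IsConfMap S d F) (l : ℂ) : F l 0 = 0 :=
  _root_.map_zero (hF.toLinearMap l)

lemma IsHLCS.alpha_pow_mem (hS : IsHLCS S) (k : ℕ) {i : ZMod 2} {a : R} (ha : a ∈ S.G i) :
    (S.alpha ^ k) a ∈ S.G i := by
  induction k with
  | zero => simpa using ha
  | succ k ih => rw [pow_succ', Module.End.mul_apply]; exact hS.alpha_even i _ ih

def omega (S : Data R) (d : ZMod 2) : Submodule ℂ (ℂ → R → R) where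
  carrier := {F | InOmega S d F}
  add_mem' := by
    rintro F G ⟨hF, hFα⟩ ⟨hG, hGα⟩
    refine ⟨⟨fun l a b => ?_, fun l c a => ?_, fun a => ?_, fun l a => ?_, fun i a ha l => ?_⟩,
      fun l a => ?_⟩ <;> simp only [Pi.add_apply]
    · rw [hF.map_add, hG.map_add]; abel
    · rw [hF.map_smul, hG.map_smul, smul_add]
    · obtain ⟨p, hp⟩ := hF.poly a
      obtain ⟨q, hq⟩ := hG.poly a
      exact ⟨p + q, fun l => by rw [pev_add, hp, hq]⟩
    · rw [hF.conf, hG.conf, map_add, smul_add]; abel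
    · exact add_mem (hF.grade i a ha l) (hG.grade i a ha l)
    · rw [hFα, hGα, map_add]
  zero_mem' :=
    ⟨⟨fun _ _ _ => (add_zero 0).symm, fun _ c _ => (smul_zero c).symm,
      fun _ => ⟨0, fun l => (pev_zero l).symm⟩, fun _ _ => by simp, fun _ _ _ _ => zero_mem _⟩,
      fun _ _ => (map_zero _).symm⟩
  smul_mem' := by
    rintro c F ⟨hF, hFα⟩
    refine ⟨⟨fun l a b => ?_, fun l e a => ?_, fun a => ?_, fun l a => ?_, fun i a ha l => ?_⟩,
      fun l a => ?_⟩ <;> simp only [Pi.smul_apply]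
    · rw [hF.map_add, smul_add]
    · rw [hF.map_smul, smul_comm]
    · obtain ⟨p, hp⟩ := hF.poly a
      exact ⟨c • p, fun l => by rw [pev_smul, hp]⟩
    · rw [hF.conf, smul_add, smul_comm c l, map_smul]
    · exact Submodule.smul_mem _ c (hF.grade i a ha l)
    · rw [hFα, map_smul]

def IsGDerTriple (S : Data R) (k : ℕ) (d : ZMod 2) (F F' F'' : ℂ → R → R) : Prop :=
  ∀ i, ∀ a ∈ S.G i, ∀ (b : R) (l m : ℂ),
    S.lb (l + m) (F m a) ((S.alpha ^ k) b) +
      ((-1 : ℂ) ^ ((d * i).val)) • S.lb l ((S.alpha ^ k) a) (F' m b) = F'' m (S.lb l a b)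

namespace IsGDerTriple

variable {G G' G'' : ℂ → R → R}

lemma add (hF : IsGDerTriple S k d F F' F'') (hG : IsGDerTriple S k d G G' G'') :
    IsGDerTriple S k d (F + G) (F' + G') (F'' + G'') := by
  intro i a ha b l m
  simp only [Pi.add_apply, S.lb_add_left, S.lb_add_right]
  linear_combination (norm := module) hF i a ha b l m + hG i a ha b l m

lemma sub (hF : IsGDerTriple S k d F F' F'') (hG : IsGDerTriple S k d G G' G'') :
    IsGDerTriple S k d (F - G) (F' - G') (F'' - G'') := by
  intro i a ha b l m
  simp only [Pi.sub_apply, S.lb_sub_left, S.lb_sub_right]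
  linear_combination (norm := module) hF i a ha b l m - hG i a ha b l m

lemma smul (c : ℂ) (hF : IsGDerTriple S k d F F' F'') :
    IsGDerTriple S k d (c • F) (c • F') (c • F'') := by
  intro i a ha b l m
  simp only [Pi.smul_apply, S.lb_smul_left, S.lb_smul_right]
  linear_combination (norm := module) c • hF i a ha b l m

end IsGDerTriple

lemma Data.lbOp_add_eq_of_lb_add_eq (S : Data R) (g : R →ₗ[ℂ] R) {m : ℂ}
    (hg : ∀ r, g (S.der r) = S.der (g r) + m • g r) {c : ℂ} {x y u v b a : R}
    (h : ∀ ν : ℂ, S.lb (ν + m) x y + c • S.lb ν u v = g (S.lb ν b a)) (l : ℂ) :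
    S.lbOp l x y + c • S.lbOp (l + m) u v = g (S.lbOp l b a) := by
  have hcoeff : taylor m (S.br x y) + c • S.br u v = (S.br b a).mapRange g (map_zero g) :=
    eq_of_forall_pev_eq fun ν => by rw [pev_add, pev_smul, pev_taylor, ← pev_mapRange]; exact h ν
  have hcomm : ∀ r, g (((-l) • 1 - S.der) r) = ((-(l + m)) • 1 - S.der) (g r) := fun r => by
    simp only [LinearMap.sub_apply, LinearMap.smul_apply, Module.End.one_apply, map_sub,
      map_smul, hg]
    module
  have hshift : m • 1 + ((-(l + m)) • 1 - S.der) = (-l) • (1 : Module.End ℂ R) - S.der := by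
    rw [← add_sub_assoc, ← add_smul, show m + -(l + m) = -l by ring]
  have := congrArg (pevOp ((-(l + m)) • 1 - S.der)) hcoeff
  rwa [pevOp_add, pevOp_smul, pevOp_taylor, hshift, ← pevOp_mapRange g hcomm] at this

lemma IsGDerTriple.swap (hS : IsHLCS S) (hF : IsConfMap S d F) (hF' : IsConfMap S d F')
    (hF'' : IsConfMap S d F'') (h : IsGDerTriple S k d F F' F'') :
    IsGDerTriple S k d F' F F'' := by
  intro i a ha b l m
  have hb : b ∈ ⨆ j, S.G j := hS.internal.submodule_iSup_eq_top ▸ Submodule.mem_top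
  induction hb using Submodule.iSup_induction' with
  | mem j b hb =>
    have hop : _ = F'' m (S.lbOp l b a) :=
      S.lbOp_add_eq_of_lb_add_eq (hF''.toLinearMap m) (hF''.conf m) (fun ν => h j b hb a ν m) l
    have e1 : (-1 : ℂ) ^ ((d * i).val) * sg i (j + d) = sg i j := sg_mul_sg_add_right d i j
    have e2 : sg (i + d) j = sg i j * (-1 : ℂ) ^ ((d * j).val) := sg_add_left i j d
    rw [hS.skew _ _ _ (hF'.grade i a ha m) _ (hS.alpha_pow_mem k hb),
      hS.skew _ _ _ (hS.alpha_pow_mem k ha) _ (hF.grade j b hb m), hS.skew i j a ha b hb,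
      hF''.map_smul, ← hop]
    linear_combination (norm := module)
      (-1 : ℂ) • e2 • S.lbOp (l + m) ((S.alpha ^ k) b) (F' m a) -
        e1 • S.lbOp l (F m b) ((S.alpha ^ k) a)
  | zero => simp only [map_zero, S.lb_zero_right, hF.map_zero, hF''.map_zero, smul_zero, add_zero]
  | add x y _ _ hx hy =>
    simp only [map_add, S.lb_add_right, hF.map_add, hF''.map_add]
    linear_combination (norm := module) hx + hy

lemma isQC_iff {C : ℂ → R → R} :
    IsQC S k d C ↔ InOmega S d C ∧ IsGDerTriple S k d C (-C) 0 := by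
  refine and_congr_right fun _ => forall₄_congr fun i a _ b => forall₂_congr fun l m => ?_
  simp only [Pi.neg_apply, Pi.zero_apply, S.lb_neg_right, smul_neg, ← sub_eq_add_neg, sub_eq_zero]

lemma IsQDer.isGDer_add {Q C : ℂ → R → R} (hQ : IsQDer S k d Q) (hC : IsQC S k d C) :
    IsGDer S k d (Q + C) := by
  obtain ⟨hQ, Q', hQ', hQQ'⟩ := hQ
  obtain ⟨hC, hC0⟩ := isQC_iff.1 hC
  exact ⟨(omega S d).add_mem hQ hC, Q + -C, Q' + 0,
    (omega S d).add_mem hQ ((omega S d).neg_mem hC), (omega S d).add_mem hQ' (omega S d).zero_mem,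
    IsGDerTriple.add hQQ' hC0⟩

lemma IsGDerTriple.isQDer_half_add (hS : IsHLCS S) (hF : InOmega S d F) (hF' : InOmega S d F')
    (hF'' : InOmega S d F'') (h : IsGDerTriple S k d F F' F'') :
    IsQDer S k d ((2 : ℂ)⁻¹ • (F + F')) := by
  have hsum := (h.add (h.swap hS hF.1 hF'.1 hF''.1)).smul (2 : ℂ)⁻¹
  rw [add_comm F' F] at hsum
  exact ⟨(omega S d).smul_mem _ (add_mem hF hF'), _,
    (omega S d).smul_mem _ (add_mem hF'' hF''), hsum⟩

lemma IsGDerTriple.isQC_half_sub (hS : IsHLCS S) (hF : InOmega S d F) (hF' : InOmega S d F')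
    (hF'' : InOmega S d F'') (h : IsGDerTriple S k d F F' F'') :
    IsQC S k d ((2 : ℂ)⁻¹ • (F - F')) := by
  have hdiff := (h.sub (h.swap hS hF.1 hF'.1 hF''.1)).smul (2 : ℂ)⁻¹
  rw [sub_self, smul_zero, ← neg_sub F, smul_neg] at hdiff
  exact isQC_iff.2 ⟨(omega S d).smul_mem _ (sub_mem hF hF'), hdiff⟩

end

theorem gder_eq_qder_add_qc_general (S : Data R) (hS : IsHLCS S) :
    (∀ (k : ℕ) (d : ZMod 2) (F : ℂ → R → R), IsGDer S k d F →
      ∃ Q C : ℂ → R → R, IsQDer S k d Q ∧ IsQC S k d C ∧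
        ∀ (l : ℂ) (a : R), F l a = Q l a + C l a) ∧
    (∀ (k : ℕ) (d : ZMod 2) (Q C : ℂ → R → R), IsQDer S k d Q → IsQC S k d C →
      IsGDer S k d (fun l a => Q l a + C l a)) ∧
    (∀ (k : ℕ) (d : ZMod 2) (F F' F'' : ℂ → R → R),
      InOmega S d F → InOmega S d F' → InOmega S d F'' →
      (∀ i, ∀ a ∈ S.G i, ∀ (b : R) (l m : ℂ),
        S.lb (l + m) (F m a) ((S.alpha ^ k) b) +
          ((-1 : ℂ) ^ ((d * i).val)) • S.lb l ((S.alpha ^ k) a) (F' m b) =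
            F'' m (S.lb l a b)) →
      IsQDer S k d (fun l a => (2 : ℂ)⁻¹ • (F l a + F' l a)) ∧
        IsQC S k d (fun l a => (2 : ℂ)⁻¹ • (F l a - F' l a))) := by
  have halves : ∀ (k : ℕ) (d : ZMod 2) (F F' F'' : ℂ → R → R),
      InOmega S d F → InOmega S d F' → InOmega S d F'' → IsGDerTriple S k d F F' F'' →
      IsQDer S k d ((2 : ℂ)⁻¹ • (F + F')) ∧ IsQC S k d ((2 : ℂ)⁻¹ • (F - F')) :=
    fun _ _ _ _ _ hF hF' hF'' h =>
      ⟨h.isQDer_half_add hS hF hF' hF'', h.isQC_half_sub hS hF hF' hF''⟩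
  refine ⟨fun k d F ⟨hF, F', F'', hF', hF'', h⟩ => ?_,
    fun _ _ _ _ hQ hC => hQ.isGDer_add hC, halves⟩
  obtain ⟨hQ, hC⟩ := halves k d F F' F'' hF hF' hF'' h
  refine ⟨_, _, hQ, hC, fun l a => ?_⟩
  simp only [Pi.smul_apply, Pi.add_apply, Pi.sub_apply]
  module

/-- For a multiplicative Hom-Lie conformal superalgebra `(R, α)`,
`GDer(R) = QDer(R) + QC(R)`: every homogeneous generalized `α^k`-derivation is a sum
of an `α^k`-quasiderivation and an `α^k`-quasicentroid, and conversely any such sum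
is a generalized `α^k`-derivation; in particular, if `D', D''` witness that `D` is a
generalized `α^k`-derivation, then `(D + D')/2` is an `α^k`-quasiderivation and
`(D - D')/2` is an `α^k`-quasicentroid. -/
theorem gder_eq_qder_add_qc (S : Data R) (hS : IsHLCS S) (hmult : S.Mult) :
    (∀ (k : ℕ) (d : ZMod 2) (F : ℂ → R → R), IsGDer S k d F →
      ∃ Q C : ℂ → R → R, IsQDer S k d Q ∧ IsQC S k d C ∧
        ∀ (l : ℂ) (a : R), F l a = Q l a + C l a) ∧
    (∀ (k : ℕ) (d : ZMod 2) (Q C : ℂ → R → R), IsQDer S k d Q → IsQC S k d C →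
      IsGDer S k d (fun l a => Q l a + C l a)) ∧
    (∀ (k : ℕ) (d : ZMod 2) (F F' F'' : ℂ → R → R),
      InOmega S d F → InOmega S d F' → InOmega S d F'' →
      (∀ i, ∀ a ∈ S.G i, ∀ (b : R) (l m : ℂ),
        S.lb (l + m) (F m a) ((S.alpha ^ k) b) +
          ((-1 : ℂ) ^ ((d * i).val)) • S.lb l ((S.alpha ^ k) a) (F' m b) =
            F'' m (S.lb l a b)) →
      IsQDer S k d (fun l a => (2 : ℂ)⁻¹ • (F l a + F' l a)) ∧
        IsQC S k d (fun l a => (2 : ℂ)⁻¹ • (F l a - F' l a))) :=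
  gder_eq_qder_add_qc_general S hS

end HLCS
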